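/- arXiv:2208.09111 — 2 statements merged into one kernel-verified Lean document; each statement's English description precedes it below -/
import Mathlib

section
/- Suppose g: ℝ^d → ℝ^d satisfies WRC_w(λ, α, β) over a set B ⊆ ℝ^d relative to a point τ ∈ ℝ^d, with min_i λ_i ≤ 1. Then the sequence defined by ω^{k+1} = ω^k − g(ω^k) satisfies ‖ω^{k+1} − τ‖_{w,∞} ≤ max{α + β, √(1 − min_i λ_i)} · ‖ω^k − τ‖_{w,∞} for every k, as long as all iterates ω^0, ω^1, ω^2, … remain in B. -/
noncomputable section

/-- **Convergence under the weak regularity condition (WRC).**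
If a direction function `g` satisfies `WRC_w(λ, α, β)` over a set `B ⊆ ℝ^d` relative to a
point `τ` (with `min_i λ_i ≤ 1`), then the iteration `ω^{k+1} = ω^k − g(ω^k)` contracts the
weighted ℓ∞ distance `‖ω^k − τ‖_{w,∞} = max_i |w_i (ω^k_i − τ_i)|` by the factor
`max{α + β, √(1 − min_i λ_i)}` at every step, as long as all iterates remain in `B`. -/
theorem wrc_convergence {d : ℕ} [NeZero d]
    (w lam : Fin d → ℝ) (hw : ∀ i, 0 < w i) (hlam : ∀ i, 0 < lam i)
    (α β : ℝ) (hα : 0 < α) (hβ : 0 < β)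
    (τ : Fin d → ℝ) (B : Set (Fin d → ℝ)) (g : (Fin d → ℝ) → Fin d → ℝ)
    (hlam1 : (⨅ i, lam i) ≤ 1)
    -- the weak regularity condition WRC_w(λ, α, β) over B:
    (hWRC : ∀ ω ∈ B,
      (∀ i : Fin d, α * (⨆ j, |w j * (ω j - τ j)|) ≤ |w i * (ω i - τ i)| →
        g ω i ^ 2 + lam i * (ω i - τ i) ^ 2 ≤ 2 * g ω i * (ω i - τ i)) ∧
      (∀ i : Fin d, |w i * (ω i - τ i)| < α * (⨆ j, |w j * (ω j - τ j)|) →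
        |w i * g ω i| ≤ β * (⨆ j, |w j * (ω j - τ j)|)))
    (ω : ℕ → Fin d → ℝ) (hiter : ∀ k, ω (k + 1) = ω k - g (ω k))
    (hB : ∀ k, ω k ∈ B) :
    ∀ k, (⨆ i, |w i * (ω (k + 1) i - τ i)|) ≤
      max (α + β) (Real.sqrt (1 - ⨅ i, lam i)) * (⨆ i, |w i * (ω k i - τ i)|) := by
  intro k
  haveI : Nonempty (Fin d) := ⟨⟨0, Nat.pos_of_ne_zero (NeZero.ne d)⟩⟩
  set N := (⨆ i, |w i * (ω k i - τ i)|) with hNdef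
  have hNbdd : BddAbove (Set.range fun i => |w i * (ω k i - τ i)|) :=
    Set.Finite.bddAbove (Set.finite_range _)
  have hle : ∀ i, |w i * (ω k i - τ i)| ≤ N := fun i => le_ciSup hNbdd i
  have hN0 : 0 ≤ N := le_trans (abs_nonneg _) (hle (Classical.arbitrary _))
  set m := (⨅ i, lam i) with hmdef
  have hm_le : ∀ i, m ≤ lam i := fun i =>
    ciInf_le (Set.Finite.bddBelow (Set.finite_range _)) i
  have h1m : 0 ≤ 1 - m := by linarith
  obtain ⟨h1, h2⟩ := hWRC (ω k) (hB k)
  apply ciSup_le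
  intro i
  have hx : ω (k + 1) i - τ i = (ω k i - τ i) - g (ω k) i := by
    rw [hiter k]; simp [Pi.sub_apply]; ring
  by_cases hc : α * N ≤ |w i * (ω k i - τ i)|
  · have hg := h1 i hc
    set x := ω k i - τ i with hxdef
    have hxg : (x - g (ω k) i) ^ 2 ≤ (1 - m) * x ^ 2 := by
      nlinarith [hm_le i, sq_nonneg x]
    have key : (w i * (ω (k + 1) i - τ i)) ^ 2 ≤ ((1 - m).sqrt * |w i * x|) ^ 2 := by
      rw [hx]
      have : ((1 - m).sqrt * |w i * x|) ^ 2 = (1 - m) * (w i * x) ^ 2 := by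
        rw [mul_pow, sq_abs, Real.sq_sqrt h1m]
      rw [this]
      have := mul_le_mul_of_nonneg_left hxg (sq_nonneg (w i))
      nlinarith
    have habs : |w i * (ω (k + 1) i - τ i)| ≤ (1 - m).sqrt * |w i * x| := by
      have h0 : 0 ≤ (1 - m).sqrt * |w i * x| :=
        mul_nonneg (Real.sqrt_nonneg _) (abs_nonneg _)
      nlinarith [abs_nonneg (w i * (ω (k + 1) i - τ i)),
        sq_abs (w i * (ω (k + 1) i - τ i))]
    calc |w i * (ω (k + 1) i - τ i)| ≤ (1 - m).sqrt * |w i * x| := habs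
      _ ≤ (1 - m).sqrt * N := by
          exact mul_le_mul_of_nonneg_left (hle i) (Real.sqrt_nonneg _)
      _ ≤ max (α + β) (1 - m).sqrt * N :=
          mul_le_mul_of_nonneg_right (le_max_right _ _) hN0
  · push_neg at hc
    have hg := h2 i hc
    have : |w i * (ω (k + 1) i - τ i)| ≤ |w i * (ω k i - τ i)| + |w i * g (ω k) i| := by
      rw [hx, mul_sub]
      exact abs_sub _ _
    calc |w i * (ω (k + 1) i - τ i)| ≤ |w i * (ω k i - τ i)| + |w i * g (ω k) i| := this
      _ ≤ α * N + β * N := add_le_add hc.le hg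
      _ = (α + β) * N := by ring
      _ ≤ max (α + β) (1 - m).sqrt * N :=
          mul_le_mul_of_nonneg_right (le_max_left _ _) hN0
end
end

section
/- There exist absolute constants C, c such that if n∆ > C log s, then the first frequency ω₁ = argmax_{τ∈[0,1)} |f(τ)^* y| selected by (un-preconditioned) OMP on y satisfies ω₁ ∈ S(τ_{T(1)}) for some index T(1) ∈ [s], and moreover |x_{T(1)}| ≥ (1 − (c log s)/(n∆)) · max_i |x_i|. -/
open scoped BigOperators

noncomputable section

/-- The (un-preconditioned) atom `f(τ) ∈ ℂ^{2n+1}` with entries `e^{2πiℓτ}`, `ℓ = -n,…,n`. -/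
def atomD (n : ℕ) (τ : ℝ) : EuclideanSpace ℂ (Fin (2 * n + 1)) :=
  WithLp.toLp 2 (fun ℓ => Complex.exp
    (2 * Real.pi * Complex.I * ((((ℓ : ℕ) : ℤ) - (n : ℤ) : ℤ) : ℂ) * (τ : ℂ)))

/-!
The correlation `⟪f(ρ), y⟫` equals `∑ x_i K(τ_i - ρ)` with `K` the Dirichlet kernel, for which
`K(0) = 2n + 1` and `|K(t)| ≤ 1 / (2 d(t))`, `d(t)` the distance from `t` to `ℤ`. Since the
frequencies are `Δ`-separated on the circle, all atoms except the one nearest to `ρ` contribute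
at most `E · max |x_i|` with `E = 6 log s / Δ` (a harmonic sum). At the frequency of the largest
coefficient the correlation is therefore at least `(2n + 1 - E) max |x_i|`, and at `ω₁`, with `τ_j`
nearest to `ω₁`, at most `|x_j| |K(τ_j - ω₁)| + E max |x_i|`. Maximality of `ω₁` gives
`|K(τ_j - ω₁)| ≥ 2n + 1 - 2E ≥ n + 2`, which forces `d(τ_j - ω₁) ≤ 1 / (2n + 4)`, and
`(2n + 1) |x_j| ≥ (2n + 1 - 2E) max |x_i|`.
-/

namespace OMP

open Complex Finset
open scoped Real

/-- Unnormalised, unlike the paper's `D_n`: `dirichletKernel n 0 = 2 * n + 1`. -/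
def dirichletKernel (n : ℕ) (t : ℝ) : ℂ :=
  ∑ ℓ : Fin (2 * n + 1), exp (2 * π * I * ((((ℓ : ℕ) : ℤ) - (n : ℤ) : ℤ) : ℂ) * (t : ℂ))

theorem inner_atomD_atomD (n : ℕ) (a b : ℝ) :
    (inner ℂ (atomD n a) (atomD n b) : ℂ) = dirichletKernel n (b - a) := by
  simp only [atomD, dirichletKernel, PiLp.inner_apply, RCLike.inner_apply]
  refine sum_congr rfl fun ℓ _ => ?_
  rw [← exp_conj, ← Complex.exp_add]
  simp only [map_mul, conj_I, conj_ofReal, map_intCast, map_ofNat]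
  push_cast
  ring_nf

theorem inner_atomD_sum {ι : Type*} (S : Finset ι) (n : ℕ) (ρ : ℝ) (x : ι → ℂ) (τ : ι → ℝ) :
    (inner ℂ (atomD n ρ) (∑ i ∈ S, x i • atomD n (τ i)) : ℂ) =
      ∑ i ∈ S, x i * dirichletKernel n (τ i - ρ) := by
  simp only [inner_sum, inner_smul_right, inner_atomD_atomD]

theorem dirichletKernel_zero (n : ℕ) : dirichletKernel n 0 = 2 * n + 1 := by
  simp [dirichletKernel]

theorem norm_dirichletKernel_le (n : ℕ) (t : ℝ) : ‖dirichletKernel n t‖ ≤ 2 * n + 1 := by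
  refine (norm_sum_le _ _).trans ?_
  simp [norm_exp]

theorem dirichletKernel_periodic (n : ℕ) : Function.Periodic (dirichletKernel n) 1 := by
  intro t
  refine sum_congr rfl fun ℓ _ => ?_
  rw [← mul_one (exp (_ * (t : ℂ))), ← exp_int_mul_two_pi_mul_I ((ℓ : ℤ) - n), ← Complex.exp_add]
  push_cast
  ring_nf

theorem norm_dirichletKernel_mul_abs_sin_le (n : ℕ) (t : ℝ) :
    ‖dirichletKernel n t‖ * |Real.sin (π * t)| ≤ 1 := by
  set q := exp (I * ↑(2 * π * t))
  have hq : ‖q‖ = 1 := norm_exp_I_mul_ofReal _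
  have hsum : dirichletKernel n t =
      exp (-(2 * π * I * n * t)) * ∑ ℓ ∈ range (2 * n + 1), q ^ ℓ := by
    rw [dirichletKernel, Fin.sum_univ_eq_sum_range
      (fun ℓ => exp (2 * π * I * (((ℓ : ℤ) - n : ℤ) : ℂ) * t)), mul_sum]
    refine sum_congr rfl fun ℓ _ => ?_
    rw [← Complex.exp_nat_mul, ← Complex.exp_add]
    push_cast
    ring_nf
  have hdiff : ‖q - 1‖ = 2 * |Real.sin (π * t)| := by
    rw [norm_exp_I_mul_ofReal_sub_one, norm_mul, Real.norm_two, Real.norm_eq_abs]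
    ring_nf
  have htel : ‖dirichletKernel n t‖ * ‖q - 1‖ = ‖q ^ (2 * n + 1) - 1‖ := by
    rw [← norm_mul, hsum, mul_assoc, geom_sum_mul, norm_mul, norm_exp]
    simp
  have hnum : ‖q ^ (2 * n + 1) - 1‖ ≤ 2 := by
    refine (norm_sub_le _ _).trans_eq ?_
    rw [norm_pow, hq, one_pow, norm_one]
    norm_num
  rw [hdiff] at htel
  linarith

theorem two_mul_abs_le_abs_sin_pi_mul {u : ℝ} (hu : |u| ≤ 1 / 2) :
    2 * |u| ≤ |Real.sin (π * u)| := by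
  have hπu : |π * u| = π * |u| := by rw [abs_mul, abs_of_pos Real.pi_pos]
  rw [Real.abs_sin_eq_sin_abs_of_abs_le_pi (by rw [hπu]; nlinarith [Real.pi_pos]), hπu]
  have h := Real.mul_le_sin (x := π * |u|) (by positivity) (by nlinarith [Real.pi_pos])
  rwa [← mul_assoc, div_mul_cancel₀ _ Real.pi_ne_zero] at h

theorem norm_dirichletKernel_mul_abs_sub_round_le (n : ℕ) (t : ℝ) :
    ‖dirichletKernel n t‖ * (2 * |t - round t|) ≤ 1 := by
  have hper : dirichletKernel n t = dirichletKernel n (t - round t) := by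
    simpa using ((dirichletKernel_periodic n).sub_int_mul_eq (x := t) (round t)).symm
  rw [hper]
  calc _ ≤ ‖dirichletKernel n (t - round t)‖ * |Real.sin (π * (t - round t))| := by
        gcongr; exact two_mul_abs_le_abs_sin_pi_mul (abs_sub_round t)
    _ ≤ 1 := norm_dirichletKernel_mul_abs_sin_le n _

theorem abs_sub_round_le_of_add_two_le_norm_dirichletKernel {n : ℕ} {t : ℝ}
    (h : n + 2 ≤ ‖dirichletKernel n t‖) : |t - round t| ≤ 1 / (2 * n + 4) := by
  have := norm_dirichletKernel_mul_abs_sub_round_le n t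
  rw [le_div_iff₀ (by positivity)]
  nlinarith [abs_nonneg (t - round t)]

theorem harmonic_mono : Monotone harmonic := fun _ _ h =>
  sum_le_sum_of_subset_of_nonneg (range_subset_range.mpr h) fun _ _ _ => by positivity

theorem sum_inv_le_harmonic_card (S : Finset ℤ) (hS : ∀ k ∈ S, 0 < k) :
    ∑ k ∈ S, (k : ℝ)⁻¹ ≤ harmonic S.card := by
  induction S using Finset.induction_on_max with
  | empty => simp
  | insert a S hlt ih =>
    have haS : a ∉ S := fun h => lt_irrefl a (hlt a h)
    have hcard : (S.card : ℤ) + 1 ≤ a := by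
      have hsub : insert a S ⊆ Icc 1 a := fun k hk => by
        rcases mem_insert.mp hk with rfl | hk
        · exact mem_Icc.mpr ⟨hS k (mem_insert_self k S), le_rfl⟩
        · exact mem_Icc.mpr ⟨hS k (mem_insert_of_mem hk), (hlt k hk).le⟩
      have := card_le_card hsub
      rw [card_insert_of_notMem haS, Int.card_Icc] at this
      omega
    rw [sum_insert haS, card_insert_of_notMem haS, harmonic_succ, Rat.cast_add, Rat.cast_inv,
      Rat.cast_natCast, add_comm]
    gcongr
    · exact ih fun k hk => hS k (mem_insert_of_mem hk)
    · exact_mod_cast hcard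

variable {ι : Type*} {Δ : ℝ}

/-- Rounding `v i / Δ` sends `Δ`-separated points `≥ Δ / 2` injectively to positive integers,
and `v i ≥ Δ / 2 · round (v i / Δ)`. -/
theorem sum_inv_le_of_separated (F : Finset ι) (v : ι → ℝ) (hΔ : 0 < Δ)
    (hlow : ∀ i ∈ F, Δ / 2 ≤ v i) (hsep : ∀ i ∈ F, ∀ j ∈ F, i ≠ j → Δ ≤ |v i - v j|) :
    ∑ i ∈ F, (v i)⁻¹ ≤ 2 * harmonic F.card / Δ := by
  set m : ι → ℤ := fun i => round (v i / Δ)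
  have hm_pos : ∀ i ∈ F, 0 < m i := fun i hi => by
    have hhalf : 1 / 2 ≤ v i / Δ := by rw [le_div_iff₀ hΔ]; linarith [hlow i hi]
    exact_mod_cast (by linarith [sub_half_lt_round (v i / Δ)] : (0 : ℝ) < m i)
  have hm_inj : Set.InjOn m F := fun i hi j hj hij => by
    by_contra hne
    have hfl : ⌊v i / Δ + 1 / 2⌋ = ⌊v j / Δ + 1 / 2⌋ := by simpa [m, round_eq] using hij
    have h1 := Int.abs_sub_lt_one_of_floor_eq_floor hfl
    rw [add_sub_add_right_eq_sub, ← sub_div, abs_div, abs_of_pos hΔ, div_lt_one hΔ] at h1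
    exact absurd (hsep i hi j hj hne) (not_le.mpr h1)
  have hterm : ∀ i ∈ F, (v i)⁻¹ ≤ 2 / Δ * ((m i : ℤ) : ℝ)⁻¹ := fun i hi => by
    have hmi : (1 : ℝ) ≤ m i := by exact_mod_cast hm_pos i hi
    have hround : (m i : ℝ) * Δ ≤ 2 * v i := by
      have h := round_le_add_half (v i / Δ)
      rw [← sub_le_iff_le_add, le_div_iff₀ hΔ] at h
      nlinarith
    calc (v i)⁻¹ ≤ ((m i : ℝ) * Δ / 2)⁻¹ := inv_anti₀ (by positivity) (by linarith)
      _ = 2 / Δ * ((m i : ℤ) : ℝ)⁻¹ := by field_simp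
  calc ∑ i ∈ F, (v i)⁻¹ ≤ ∑ i ∈ F, 2 / Δ * ((m i : ℤ) : ℝ)⁻¹ := sum_le_sum hterm
    _ = 2 / Δ * ∑ k ∈ F.image m, (k : ℝ)⁻¹ := by rw [← mul_sum, sum_image hm_inj]
    _ ≤ 2 / Δ * harmonic (F.image m).card := by
        gcongr
        exact sum_inv_le_harmonic_card _ fun k hk => by
          obtain ⟨i, hi, rfl⟩ := mem_image.mp hk; exact hm_pos i hi
    _ = 2 * harmonic F.card / Δ := by rw [card_image_of_injOn hm_inj]; ring

theorem sum_inv_abs_le_of_separated (F : Finset ι) (v : ι → ℝ) (hΔ : 0 < Δ)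
    (hlow : ∀ i ∈ F, Δ / 2 ≤ |v i|) (hsep : ∀ i ∈ F, ∀ j ∈ F, i ≠ j → Δ ≤ |v i - v j|) :
    ∑ i ∈ F, |v i|⁻¹ ≤ 4 * harmonic F.card / Δ := by
  have hside : ∀ q : ι → Prop, [DecidablePred q] →
      (∀ i j, q i → q j → |v i - v j| = |(|v i| - |v j|)|) →
      ∑ i ∈ F.filter q, |v i|⁻¹ ≤ 2 * harmonic F.card / Δ := fun q _ hq => by
    refine (sum_inv_le_of_separated _ (|v ·|) hΔ (fun i hi => hlow i (mem_filter.mp hi).1)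
      fun i hi j hj hij => ?_).trans ?_
    · rw [mem_filter] at hi hj
      rw [← hq _ _ hi.2 hj.2]
      exact hsep i hi.1 j hj.1 hij
    · gcongr
      exact_mod_cast harmonic_mono (card_filter_le _ _)
  rw [← sum_filter_add_sum_filter_not F (0 ≤ v ·)]
  have hpos := hside (0 ≤ v ·) fun i j hi hj => by rw [abs_of_nonneg hi, abs_of_nonneg hj]
  have hneg := hside (¬ 0 ≤ v ·) fun i j hi hj => by
    rw [abs_of_neg (not_le.mp hi), abs_of_neg (not_le.mp hj), ← abs_neg]; ring_nf
  refine (add_le_add hpos hneg).trans_eq ?_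
  ring

theorem harmonic_pred_le_three_mul_log (s : ℕ) : (harmonic (s - 1) : ℝ) ≤ 3 * Real.log s := by
  rcases s with _ | _ | s
  · simp
  · simp
  · have hH : (harmonic (s + 1) : ℝ) ≤ harmonic (s + 2) := by
      exact_mod_cast harmonic_mono (by omega)
    have hlog : Real.log 2 ≤ Real.log (s + 2 : ℕ) := Real.log_le_log (by norm_num) (by simp)
    simp only [Nat.add_sub_cancel]
    linarith [harmonic_le_one_add_log (s + 2), Real.log_two_gt_d9]

theorem le_half_of_forall_le_abs_add_int {a : ℝ} (h : ∀ k : ℤ, Δ ≤ |a + k|) : Δ ≤ 1 / 2 := by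
  have h' := h (-round a)
  rw [Int.cast_neg, ← sub_eq_add_neg] at h'
  exact h'.trans (abs_sub_round a)

/-- `j` is the point nearest to `ρ` on the circle. -/
theorem exists_forall_half_le_abs_sub_add_int [Fintype ι] [Nonempty ι] (τ : ι → ℝ)
    (hsep : ∀ i j, i ≠ j → ∀ k : ℤ, Δ ≤ |τ i - τ j + k|) (ρ : ℝ) :
    ∃ j, ∀ i, i ≠ j → ∀ k : ℤ, Δ / 2 ≤ |τ i - ρ + k| := by
  obtain ⟨j, -, hj⟩ :=
    exists_min_image univ (fun i => |τ i - ρ - round (τ i - ρ)|) univ_nonempty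
  refine ⟨j, fun i hij k => ?_⟩
  have hsep' := hsep i j hij (k + round (τ j - ρ))
  have hi : |τ i - ρ - round (τ i - ρ)| ≤ |τ i - ρ + k| := by
    simpa [sub_neg_eq_add] using round_le (τ i - ρ) (-k)
  have htri : |τ i - τ j + ((k + round (τ j - ρ) : ℤ) : ℝ)| ≤
      |τ i - ρ + k| + |τ j - ρ - round (τ j - ρ)| := by
    push_cast
    exact (abs_sub _ _).trans_eq' (by ring_nf)
  linarith [hj i (mem_univ i)]

section Correlation

variable [Fintype ι] [DecidableEq ι] (n : ℕ) (x : ι → ℂ) (τ : ι → ℝ) {B : ℝ}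
  (hΔ : 0 < Δ) (hx : ∀ i, ‖x i‖ ≤ B) (hsep : ∀ i i', i ≠ i' → ∀ k : ℤ, Δ ≤ |τ i - τ i' + k|)
include hΔ hx hsep

theorem norm_sum_erase_mul_dirichletKernel_le (ρ : ℝ) (j : ι)
    (hfar : ∀ i, i ≠ j → ∀ k : ℤ, Δ / 2 ≤ |τ i - ρ + k|) :
    ‖∑ i ∈ univ.erase j, x i * dirichletKernel n (τ i - ρ)‖ ≤
      B * (6 * Real.log (Fintype.card ι) / Δ) := by
  have hB : 0 ≤ B := (norm_nonneg _).trans (hx j)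
  set u : ι → ℝ := fun i => τ i - ρ - round (τ i - ρ)
  have hu_low : ∀ i ∈ univ.erase j, Δ / 2 ≤ |u i| := fun i hi => by
    simpa [u, sub_eq_add_neg] using hfar i (ne_of_mem_erase hi) (-round (τ i - ρ))
  have hu_sep : ∀ i ∈ univ.erase j, ∀ i' ∈ univ.erase j, i ≠ i' → Δ ≤ |u i - u i'| :=
    fun i _ i' _ hii' => by
      convert hsep i i' hii' (round (τ i' - ρ) - round (τ i - ρ)) using 2
      push_cast; ring
  have hterm : ∀ i ∈ univ.erase j, ‖x i * dirichletKernel n (τ i - ρ)‖ ≤ B / 2 * |u i|⁻¹ :=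
    fun i hi => by
      have hu : 0 < |u i| := lt_of_lt_of_le (by positivity) (hu_low i hi)
      have hK : ‖dirichletKernel n (τ i - ρ)‖ ≤ (2 * |u i|)⁻¹ := by
        rw [← one_div, le_div_iff₀ (by positivity)]
        exact norm_dirichletKernel_mul_abs_sub_round_le n (τ i - ρ)
      rw [norm_mul]
      calc _ ≤ B * (2 * |u i|)⁻¹ := mul_le_mul (hx i) hK (norm_nonneg _) hB
        _ = B / 2 * |u i|⁻¹ := by rw [mul_inv]; ring
  have hcard : (univ.erase j).card = Fintype.card ι - 1 := by
    rw [card_erase_of_mem (mem_univ j), card_univ]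
  calc _ ≤ ∑ i ∈ univ.erase j, ‖x i * dirichletKernel n (τ i - ρ)‖ := norm_sum_le _ _
    _ ≤ ∑ i ∈ univ.erase j, B / 2 * |u i|⁻¹ := sum_le_sum hterm
    _ ≤ B / 2 * (4 * harmonic (Fintype.card ι - 1) / Δ) := by
        rw [← mul_sum, ← hcard]
        gcongr
        exact sum_inv_abs_le_of_separated _ u hΔ hu_low hu_sep
    _ = B * (2 * harmonic (Fintype.card ι - 1) / Δ) := by ring
    _ ≤ B * (6 * Real.log (Fintype.card ι) / Δ) := by
        gcongr B * (?_ / Δ)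
        linarith [harmonic_pred_le_three_mul_log (Fintype.card ι)]

theorem norm_sum_mul_dirichletKernel_le (ρ : ℝ) (j : ι)
    (hfar : ∀ i, i ≠ j → ∀ k : ℤ, Δ / 2 ≤ |τ i - ρ + k|) :
    ‖∑ i, x i * dirichletKernel n (τ i - ρ)‖ ≤
      ‖x j‖ * ‖dirichletKernel n (τ j - ρ)‖ + B * (6 * Real.log (Fintype.card ι) / Δ) := by
  rw [← add_sum_erase _ _ (mem_univ j), ← norm_mul]
  exact (norm_add_le _ _).trans
    (add_le_add_right (norm_sum_erase_mul_dirichletKernel_le n x τ hΔ hx hsep ρ j hfar) _)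

theorem le_norm_sum_mul_dirichletKernel (j : ι) :
    (2 * n + 1) * ‖x j‖ - B * (6 * Real.log (Fintype.card ι) / Δ) ≤
      ‖∑ i, x i * dirichletKernel n (τ i - τ j)‖ := by
  have hfar : ∀ i, i ≠ j → ∀ k : ℤ, Δ / 2 ≤ |τ i - τ j + k| :=
    fun i hi k => (half_le_self hΔ.le).trans (hsep i j hi k)
  have hpeak : ‖x j * dirichletKernel n (τ j - τ j)‖ = (2 * n + 1) * ‖x j‖ := by
    rw [sub_self, dirichletKernel_zero, norm_mul, mul_comm]
    norm_cast
  rw [← add_sum_erase _ _ (mem_univ j)]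
  linarith [norm_le_add_norm_add (x j * dirichletKernel n (τ j - τ j))
    (∑ i ∈ univ.erase j, x i * dirichletKernel n (τ i - τ j)),
    norm_sum_erase_mul_dirichletKernel_le n x τ hΔ hx hsep (τ j) j hfar]

end Correlation

theorem two_mul_six_mul_log_div_le {n s : ℕ} (hn : 0 < n) (hΔ : 0 < Δ) (hhalf : 2 ≤ s → Δ ≤ 1 / 2)
    (h : 24 * Real.log s < n * Δ) : 2 * (6 * Real.log s / Δ) ≤ n - 1 := by
  have hn1 : (1 : ℝ) ≤ n := by exact_mod_cast hn
  rw [mul_div_assoc', div_le_iff₀ hΔ]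
  rcases lt_or_ge s 2 with hs | hs
  · have hlog : Real.log s = 0 := by interval_cases s <;> simp
    rw [hlog, mul_zero, mul_zero]
    exact mul_nonneg (by linarith) hΔ.le
  · have hlog : Real.log 2 ≤ Real.log s := Real.log_le_log (by norm_num) (by exact_mod_cast hs)
    nlinarith [hhalf hs, Real.log_two_gt_d9]

theorem add_two_le_of_sub_le_mul_add {n B a K E : ℝ} (hB : 0 < B) (ha : a ≤ B) (hK : 0 ≤ K)
    (hE : 2 * E ≤ n - 1) (h : (2 * n + 1) * B - B * E ≤ a * K + B * E) : n + 2 ≤ K :=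
  le_of_mul_le_mul_left (by nlinarith [mul_le_mul_of_nonneg_right ha hK]) hB

theorem one_sub_div_mul_le_of_sub_le_mul_add {n B a K E : ℝ} (hn : 0 < n) (hB : 0 ≤ B)
    (hE : 0 ≤ E) (ha : 0 ≤ a) (hK : K ≤ 2 * n + 1)
    (h : (2 * n + 1) * B - B * E ≤ a * K + B * E) : (1 - E / n) * B ≤ a := by
  have hEn : E = n * (E / n) := by field_simp
  refine le_of_mul_le_mul_left ?_ (by positivity : 0 < 2 * n + 1)
  nlinarith [mul_le_mul_of_nonneg_left hK ha, mul_nonneg (div_nonneg hE hn.le) hB]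

end OMP

open OMP in
/-- **First-step analysis of un-preconditioned OMP.**
There are absolute constants `C, c` such that if `n∆ > C log s` (with `∆` the wrap-around
separation of the distinct frequencies `τ_1,…,τ_s ⊆ [0,1)`), then any maximizer `ω₁` of
`τ ↦ |f(τ)^* y|` over `[0,1)`, where `y = Σ_i x_i f(τ_i)`, lies within `1/(2n+4)` (mod 1) of
some true frequency `τ_{T(1)}`, and moreover `|x_{T(1)}| ≥ (1 − c·log s/(n∆))·max_i |x_i|`. -/
theorem omp_first_step_unpreconditioned :
    ∃ C c : ℝ, 0 < C ∧ 0 < c ∧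
      ∀ (n s : ℕ), 0 < n → 0 < s →
      ∀ (τ : Fin s → ℝ), (∀ i, τ i ∈ Set.Ico (0 : ℝ) 1) →
      ∀ (Δ : ℝ), 0 < Δ → (∀ i j, i ≠ j → ∀ k : ℤ, Δ ≤ |τ i - τ j + (k : ℝ)|) →
      ∀ (x : Fin s → ℂ), (∀ i, x i ≠ 0) →
      C * Real.log s < (n : ℝ) * Δ →
      ∀ ω₁ ∈ Set.Ico (0 : ℝ) 1,
        (∀ τ' ∈ Set.Ico (0 : ℝ) 1,
          ‖(inner ℂ (atomD n τ') (∑ i, x i • atomD n (τ i)) : ℂ)‖ ≤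
          ‖(inner ℂ (atomD n ω₁) (∑ i, x i • atomD n (τ i)) : ℂ)‖) →
        ∃ j : Fin s,
          (∃ k : ℤ, |ω₁ - τ j + (k : ℝ)| ≤ 1 / (2 * (n : ℝ) + 4)) ∧
          (1 - c * Real.log s / ((n : ℝ) * Δ)) * (⨆ i, ‖x i‖) ≤
            ‖x j‖ := by
  refine ⟨24, 6, by norm_num, by norm_num, ?_⟩
  intro n s hn hs τ hτ Δ hΔ hsep x hx hlog ω₁ _ hmax
  have : Nonempty (Fin s) := ⟨⟨0, hs⟩⟩
  obtain ⟨i₀, hi₀⟩ := exists_eq_ciSup_of_finite (f := fun i => ‖x i‖)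
  set B := ⨆ i, ‖x i‖
  set E := 6 * Real.log s / Δ
  have hxB : ∀ i, ‖x i‖ ≤ B := le_ciSup (Finite.bddAbove_range _)
  have hB : 0 < B := hi₀ ▸ norm_pos_iff.2 (hx i₀)
  obtain ⟨j, hfar⟩ := exists_forall_half_le_abs_sub_add_int τ hsep ω₁
  have hpeak := le_norm_sum_mul_dirichletKernel n x τ hΔ hxB hsep i₀
  have hnear := norm_sum_mul_dirichletKernel_le n x τ hΔ hxB hsep ω₁ j hfar
  have hmax₀ := hmax _ (hτ i₀)
  simp only [inner_atomD_sum, Fintype.card_fin, hi₀] at hpeak hnear hmax₀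
  have hcompare := (hpeak.trans hmax₀).trans hnear
  have hE : 2 * E ≤ n - 1 := two_mul_six_mul_log_div_le hn hΔ
    (fun hs2 => le_half_of_forall_le_abs_add_int (hsep ⟨0, hs⟩ ⟨1, hs2⟩ (by simp)))
    (by simpa using hlog)
  refine ⟨j, ⟨round (τ j - ω₁), ?_⟩, ?_⟩
  · rw [show ω₁ - τ j + round (τ j - ω₁) = -(τ j - ω₁ - round (τ j - ω₁)) by ring, abs_neg]
    exact abs_sub_round_le_of_add_two_le_norm_dirichletKernel
      (add_two_le_of_sub_le_mul_add hB (hxB j) (norm_nonneg _) hE hcompare)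
  · rw [show 6 * Real.log s / (n * Δ) = E / n by ring]
    exact one_sub_div_mul_le_of_sub_le_mul_add (by exact_mod_cast hn) hB.le (by positivity)
      (norm_nonneg _) (norm_dirichletKernel_le n _) hcompare
end
end
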